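/- The modified Bessel function of the first kind of order zero, I₀(x) = ∑_{n=0}^∞ x²ⁿ / (2²ⁿ (n!)²), is well defined (the series converges for every x ∈ ℝ), is twice differentiable, and satisfies the modified Bessel equation of order zero: x I₀''(x) + I₀'(x) − x I₀(x) = 0 for all x ∈ ℝ. -/

import Mathlib

/-!
The `k`-th derivative of the term `x ^ (2n) / (4 ^ n (n!)²)` is
`(2n)(2n-1)⋯(2n-k+1) x ^ (2n-k) / (4 ^ n (n!)²)`. Since `(2n) ^ k ≤ k! e ^ (2n)`, on `|x| ≤ R`
these are dominated by `k! (e² R²) ^ n / n!`, a convergent exponential series, so `I₀` can be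
differentiated termwise as often as we like. The equation then holds term by term up to a shift
of index: `x a''ₙ₊₁ + a'ₙ₊₁ = (2n+2)² x ^ (2n+1) / (4 ^ (n+1) ((n+1)!)²) = x aₙ`.
-/

/-- The modified Bessel function of the first kind of order zero,
`I₀(x) = ∑ x²ⁿ / (2²ⁿ (n!)²)`. -/
noncomputable def besselI0 (x : ℝ) : ℝ :=
  ∑' n : ℕ, x ^ (2 * n) / (2 ^ (2 * n) * ((n.factorial : ℝ)) ^ 2)

open Nat Real

/-- The `k`-th derivative of the `n`-th term of `besselI0`; for `k > 2 * n` the truncated exponent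
`2 * n - k` is harmless because the falling factorial `(2 * n).descFactorial k` vanishes. -/
noncomputable def besselI0DerivTerm (k n : ℕ) (x : ℝ) : ℝ :=
  ((2 * n).descFactorial k : ℝ) * x ^ (2 * n - k) / (2 ^ (2 * n) * (n ! : ℝ) ^ 2)

noncomputable def besselI0DerivSeries (k : ℕ) (x : ℝ) : ℝ :=
  ∑' n, besselI0DerivTerm k n x

theorem besselI0DerivTerm_zero (n : ℕ) (x : ℝ) :
    besselI0DerivTerm 0 n x = x ^ (2 * n) / (2 ^ (2 * n) * (n ! : ℝ) ^ 2) := by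
  simp [besselI0DerivTerm]

theorem hasDerivAt_besselI0DerivTerm (k n : ℕ) (x : ℝ) :
    HasDerivAt (besselI0DerivTerm k n) (besselI0DerivTerm (k + 1) n x) x := by
  refine (((hasDerivAt_pow (2 * n - k) x).const_mul ((2 * n).descFactorial k : ℝ)).div_const
    (2 ^ (2 * n) * (n ! : ℝ) ^ 2)).congr_deriv ?_
  rw [besselI0DerivTerm, descFactorial_succ, Nat.sub_sub]
  push_cast
  ring

theorem descFactorial_le_factorial_mul_exp (m k : ℕ) :
    (m.descFactorial k : ℝ) ≤ k ! * exp m := by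
  have h := pow_div_factorial_le_exp (x := m) m.cast_nonneg k
  rw [div_le_iff₀ (by positivity)] at h
  calc (m.descFactorial k : ℝ) ≤ (m ^ k : ℕ) := by exact_mod_cast descFactorial_le_pow m k
    _ ≤ k ! * exp m := by push_cast; linarith

theorem norm_besselI0DerivTerm_le (k n : ℕ) {R y : ℝ} (hR : 1 ≤ R) (hy : |y| ≤ R) :
    ‖besselI0DerivTerm k n y‖ ≤ k ! * ((exp 2 * R ^ 2) ^ n / n !) := by
  have hcoeff : ((2 * n).descFactorial k : ℝ) ≤ k ! * exp 2 ^ n := by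
    simpa [← exp_nat_mul, mul_comm] using descFactorial_le_factorial_mul_exp (2 * n) k
  have hpow : |y| ^ (2 * n - k) ≤ (R ^ 2) ^ n := by
    rw [← pow_mul]
    exact (pow_le_pow_left₀ (abs_nonneg y) hy _).trans (pow_le_pow_right₀ hR (Nat.sub_le _ _))
  have hden : (n ! : ℝ) ≤ 2 ^ (2 * n) * (n ! : ℝ) ^ 2 := by
    have h1 : (1 : ℝ) ≤ n ! := by exact_mod_cast n.factorial_pos
    nlinarith [one_le_pow₀ (M₀ := ℝ) (a := 2) one_le_two (n := 2 * n)]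
  have hD : (0 : ℝ) < 2 ^ (2 * n) * (n ! : ℝ) ^ 2 := by positivity
  rw [besselI0DerivTerm, norm_div, norm_mul, norm_pow, Real.norm_natCast, Real.norm_eq_abs,
    Real.norm_of_nonneg hD.le, mul_div_assoc', mul_pow, ← mul_assoc]
  exact div_le_div₀ (by positivity) (mul_le_mul hcoeff hpow (by positivity) (by positivity))
    (by positivity) hden

theorem summable_besselI0DerivTerm (k : ℕ) (x : ℝ) :
    Summable (besselI0DerivTerm k · x) :=
  ((summable_pow_div_factorial (exp 2 * (|x| + 1) ^ 2)).mul_left (k ! : ℝ)).of_norm_bounded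
    fun n => norm_besselI0DerivTerm_le k n (le_add_of_nonneg_left (abs_nonneg x))
      (le_add_of_nonneg_right zero_le_one)

theorem hasDerivAt_besselI0DerivSeries (k : ℕ) (x : ℝ) :
    HasDerivAt (besselI0DerivSeries k) (besselI0DerivSeries (k + 1) x) x := by
  have mem_ball {y : ℝ} : y ∈ Metric.ball 0 (|x| + 1) ↔ |y| < |x| + 1 := by simp
  exact hasDerivAt_tsum_of_isPreconnected
    ((summable_pow_div_factorial (exp 2 * (|x| + 1) ^ 2)).mul_left ((k + 1) ! : ℝ))
    Metric.isOpen_ball (convex_ball _ _).isPreconnected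
    (fun n y _ => hasDerivAt_besselI0DerivTerm k n y)
    (fun n y hy => norm_besselI0DerivTerm_le (k + 1) n (le_add_of_nonneg_left (abs_nonneg x))
      (mem_ball.1 hy).le)
    (mem_ball.2 (by rw [abs_zero]; positivity)) (summable_besselI0DerivTerm k 0)
    (mem_ball.2 (lt_add_one _))

theorem besselI0DerivSeries_zero : besselI0DerivSeries 0 = besselI0 :=
  funext fun x => tsum_congr fun n => besselI0DerivTerm_zero n x

theorem deriv_besselI0 : deriv besselI0 = besselI0DerivSeries 1 := by
  rw [← besselI0DerivSeries_zero]
  exact funext fun x => (hasDerivAt_besselI0DerivSeries 0 x).deriv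

theorem besselI0DerivTerm_ode_zero (x : ℝ) :
    x * besselI0DerivTerm 2 0 x + besselI0DerivTerm 1 0 x = 0 := by
  simp [besselI0DerivTerm]

theorem besselI0DerivTerm_ode_succ (n : ℕ) (x : ℝ) :
    x * besselI0DerivTerm 2 (n + 1) x + besselI0DerivTerm 1 (n + 1) x =
      x * besselI0DerivTerm 0 n x := by
  have h1 : 2 * (n + 1) - 1 = 2 * n + 1 := by omega
  have h2 : 2 * (n + 1) - 2 = 2 * n := by omega
  simp only [besselI0DerivTerm, h1, h2, descFactorial_succ, descFactorial_zero, Nat.sub_zero,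
    factorial_succ]
  push_cast
  field_simp
  ring

theorem besselI0DerivSeries_ode (x : ℝ) :
    x * besselI0DerivSeries 2 x + besselI0DerivSeries 1 x = x * besselI0DerivSeries 0 x := by
  have hsum : HasSum (fun n => x * besselI0DerivTerm 2 n x + besselI0DerivTerm 1 n x)
      (x * besselI0DerivSeries 2 x + besselI0DerivSeries 1 x) :=
    ((summable_besselI0DerivTerm 2 x).hasSum.mul_left x).add
      (summable_besselI0DerivTerm 1 x).hasSum
  have hshift : HasSum
      (fun n => x * besselI0DerivTerm 2 (n + 1) x + besselI0DerivTerm 1 (n + 1) x)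
      (x * besselI0DerivSeries 0 x) :=
    ((summable_besselI0DerivTerm 0 x).hasSum.mul_left x).congr_fun
      fun n => besselI0DerivTerm_ode_succ n x
  simpa [besselI0DerivTerm_ode_zero] using ((hasSum_nat_add_iff' 1).2 hsum).unique hshift

/-- `I₀` is well defined (its defining series converges for every `x ∈ ℝ`), is twice
differentiable, and satisfies the modified Bessel equation of order zero:
`x I₀''(x) + I₀'(x) − x I₀(x) = 0` for all `x ∈ ℝ`. -/
theorem besselI0_wellDefined_and_ode :
    (∀ x : ℝ, Summable fun n : ℕ =>
      x ^ (2 * n) / (2 ^ (2 * n) * ((n.factorial : ℝ)) ^ 2)) ∧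
    Differentiable ℝ besselI0 ∧
    Differentiable ℝ (deriv besselI0) ∧
    (∀ x : ℝ,
      x * deriv (deriv besselI0) x + deriv besselI0 x - x * besselI0 x = 0) := by
  refine ⟨fun x => ?_, fun x => ?_, ?_, fun x => ?_⟩
  · simpa only [besselI0DerivTerm_zero] using summable_besselI0DerivTerm 0 x
  · rw [← besselI0DerivSeries_zero]
    exact (hasDerivAt_besselI0DerivSeries 0 x).differentiableAt
  · rw [deriv_besselI0]
    exact fun x => (hasDerivAt_besselI0DerivSeries 1 x).differentiableAt
  · rw [deriv_besselI0, (hasDerivAt_besselI0DerivSeries 1 x).deriv, ← besselI0DerivSeries_zero,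
      besselI0DerivSeries_ode, sub_self]
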